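/- Let Γ be a connected simple graph on a finite vertex set and let x, y be two distinct vertices. Let Γ̃ be the graph obtained from Γ by interchanging x and y, i.e., for every vertex z ∉ {x, y}: z is adjacent to x in Γ̃ iff z is adjacent to y in Γ, and z is adjacent to y in Γ̃ iff z is adjacent to x in Γ; x is adjacent to y in Γ̃ iff x is adjacent to y in Γ; all adjacencies not involving x or y are unchanged. Then there exists a finite sequence of edge slides transforming Γ into Γ̃. -/

import Mathlib

def EdgeSlide {V : Type*} (G G' : SimpleGraph V) : Prop :=
  ∃ x y z : V, x ≠ z ∧ G.Adj x y ∧ G.Adj y z ∧ ¬ G.Adj x z ∧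
    G' = G.deleteEdges {s(x, y)} ⊔ SimpleGraph.fromEdgeSet {s(x, z)}

/-!
If `x ~ y`, sliding the edge `zx` to `zy` for every neighbour `z` of `x` that is not adjacent
to `y` leads to a graph `G.shiftNbrs x y` in which `x` keeps only `y` and the common neighbours,
while `y` collects all the others. Interchanging `x` and `y` in `G` leads to the same graph, and
slides are reversible, so `G` and its interchange are joined by slides.

For general `x, y`, relabelling carries slides to slides, so the permutations `σ` for which `G`
slides to `G.comap σ` form a monoid. It contains the transpositions along edges, hence, as
`(a c) = (b c) (a b) (b c)`, the transpositions of all pairs of vertices joined by a path.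
-/

open Equiv Relation

namespace SimpleGraph

variable {V : Type*}

def moveEdge (G : SimpleGraph V) (x y z : V) : SimpleGraph V :=
  G.deleteEdges {s(x, y)} ⊔ fromEdgeSet {s(x, z)}

@[simp]
lemma moveEdge_adj {G : SimpleGraph V} {x y z a b : V} :
    (G.moveEdge x y z).Adj a b ↔ G.Adj a b ∧ s(a, b) ≠ s(x, y) ∨ s(a, b) = s(x, z) ∧ a ≠ b := by
  simp [moveEdge]

lemma edgeSet_moveEdge (G : SimpleGraph V) {x z : V} (y : V) (hxz : x ≠ z) :
    (G.moveEdge x y z).edgeSet = insert s(x, z) (G.edgeSet \ {s(x, y)}) := by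
  rw [moveEdge, edgeSet_sup, edgeSet_deleteEdges, edgeSet_fromEdgeSet,
    sdiff_eq_left.mpr (Set.disjoint_singleton_left.mpr (by simpa using hxz)), Set.union_comm,
    Set.singleton_union]

lemma moveEdge_moveEdge {G : SimpleGraph V} {x y z : V} (hxz : x ≠ z) (hxy : G.Adj x y)
    (hxz' : ¬G.Adj x z) : (G.moveEdge x y z).moveEdge x z y = G := by
  apply edgeSet_injective
  rw [edgeSet_moveEdge _ _ hxy.ne, edgeSet_moveEdge _ _ hxz, Set.insert_sdiff_self_of_notMem
    fun h ↦ hxz' h.1, Set.insert_sdiff_singleton, Set.insert_eq_of_mem (G.mem_edgeSet.mpr hxy)]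

lemma comap_moveEdge (G : SimpleGraph V) (σ : V ≃ V) (x y z : V) :
    (G.moveEdge x y z).comap σ = (G.comap σ).moveEdge (σ.symm x) (σ.symm y) (σ.symm z) := by
  ext a b
  simp [Equiv.eq_symm_apply]

def privateNbrs (G : SimpleGraph V) (x y : V) : Set V := {z | G.Adj x z ∧ ¬G.Adj y z ∧ z ≠ y}

def shiftNbrs (G : SimpleGraph V) (x y : V) : SimpleGraph V :=
  G.deleteEdges ((s(x, ·)) '' G.privateNbrs x y) ⊔ fromEdgeSet ((s(y, ·)) '' G.privateNbrs x y)

lemma shiftNbrs_adj {G : SimpleGraph V} {x y a b : V} :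
    (G.shiftNbrs x y).Adj a b ↔
      G.Adj a b ∧ ¬(a = x ∧ b ∈ G.privateNbrs x y ∨ b = x ∧ a ∈ G.privateNbrs x y) ∨
        a = y ∧ b ∈ G.privateNbrs x y ∨ b = y ∧ a ∈ G.privateNbrs x y := by
  simp only [shiftNbrs, sup_adj, deleteEdges_adj, fromEdgeSet_adj, Set.mem_image, Sym2.eq_iff]
  constructor
  · rintro (⟨h, h'⟩ | ⟨⟨w, hw, h⟩, -⟩)
    · refine .inl ⟨h, ?_⟩
      rintro (⟨rfl, hb⟩ | ⟨rfl, ha⟩)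
      exacts [h' ⟨b, hb, .inl ⟨rfl, rfl⟩⟩, h' ⟨a, ha, .inr ⟨rfl, rfl⟩⟩]
    · rcases h with ⟨rfl, rfl⟩ | ⟨rfl, rfl⟩ <;> simp [hw]
  · rintro (⟨h, h'⟩ | ⟨rfl, hb⟩ | ⟨rfl, ha⟩)
    · refine .inl ⟨h, ?_⟩
      rintro ⟨w, hw, ⟨rfl, rfl⟩ | ⟨rfl, rfl⟩⟩
      exacts [h' (.inl ⟨rfl, hw⟩), h' (.inr ⟨rfl, hw⟩)]
    · exact .inr ⟨⟨b, hb, .inl ⟨rfl, rfl⟩⟩, fun h ↦ hb.2.2 h.symm⟩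
    · exact .inr ⟨⟨a, ha, .inr ⟨rfl, rfl⟩⟩, ha.2.2⟩

lemma shiftNbrs_eq_self {G : SimpleGraph V} {x y : V} (h : G.privateNbrs x y = ∅) :
    G.shiftNbrs x y = G := by
  simp [shiftNbrs, h]

lemma privateNbrs_moveEdge {G : SimpleGraph V} {x y z : V}
    (hz : z ∈ G.privateNbrs x y) :
    (G.moveEdge z x y).privateNbrs x y = G.privateNbrs x y \ {z} := by
  ext w
  simp only [privateNbrs, Set.mem_ofPred_eq] at hz ⊢
  aesop

lemma shiftNbrs_moveEdge {G : SimpleGraph V} {x y z : V}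
    (hz : z ∈ G.privateNbrs x y) : (G.moveEdge z x y).shiftNbrs x y = G.shiftNbrs x y := by
  ext a b
  simp only [shiftNbrs_adj, privateNbrs_moveEdge hz]
  simp only [privateNbrs, Set.mem_ofPred_eq, Set.mem_sdiff, Set.mem_singleton_iff, moveEdge_adj,
    Sym2.eq_iff] at *
  by_cases hax : a = x <;> by_cases hay : a = y <;> by_cases haz : a = z <;>
    by_cases hbx : b = x <;> by_cases hby : b = y <;> by_cases hbz : b = z <;>
    subst_vars <;> simp_all [adj_comm]

lemma shiftNbrs_comap_swap [DecidableEq V] {G : SimpleGraph V} {x y : V} :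
    (G.comap (swap x y)).shiftNbrs x y = G.shiftNbrs x y := by
  ext a b
  simp only [shiftNbrs_adj, privateNbrs, comap_adj, Set.mem_ofPred_eq, swap_apply_def]
  by_cases hax : a = x <;> by_cases hay : a = y <;>
    by_cases hbx : b = x <;> by_cases hby : b = y <;>
    subst_vars <;> simp_all [adj_comm] <;> tauto

end SimpleGraph

open SimpleGraph

section

variable {V : Type*}

lemma edgeSlide_moveEdge {G : SimpleGraph V} {x y z : V} (hxz : x ≠ z) (hxy : G.Adj x y)
    (hyz : G.Adj y z) (hxz' : ¬G.Adj x z) : EdgeSlide G (G.moveEdge x y z) :=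
  ⟨x, y, z, hxz, hxy, hyz, hxz', rfl⟩

lemma EdgeSlide.symm {G G' : SimpleGraph V} (h : EdgeSlide G G') : EdgeSlide G' G := by
  obtain ⟨x, y, z, hxz, hxy, hyz, hxz', rfl⟩ := h
  change EdgeSlide (G.moveEdge x y z) G
  have hyz' : y ≠ z := by rintro rfl; exact hxz' hxy
  nth_rw 2 [← moveEdge_moveEdge hxz hxy hxz']
  refine edgeSlide_moveEdge hxy.ne ?_ ?_ ?_ <;> simp [hxz, hxz.symm, hyz.symm, hxy.ne.symm, hyz']

lemma EdgeSlide.comap {G G' : SimpleGraph V} (h : EdgeSlide G G') (σ : V ≃ V) :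
    EdgeSlide (G.comap σ) (G'.comap σ) := by
  obtain ⟨x, y, z, hxz, hxy, hyz, hxz', rfl⟩ := h
  change EdgeSlide _ ((G.moveEdge x y z).comap σ)
  rw [comap_moveEdge]
  exact edgeSlide_moveEdge (by simpa) (by simpa) (by simpa) (by simpa)

lemma reflTransGen_edgeSlide_symm {G G' : SimpleGraph V} (h : ReflTransGen EdgeSlide G G') :
    ReflTransGen EdgeSlide G' G :=
  ReflTransGen.mono (fun _ _ ↦ EdgeSlide.symm) _ _ (ReflTransGen.swap _ _ h)

lemma reflTransGen_edgeSlide_comap {G G' : SimpleGraph V} (h : ReflTransGen EdgeSlide G G')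
    (σ : V ≃ V) : ReflTransGen EdgeSlide (G.comap σ) (G'.comap σ) :=
  h.lift (fun H ↦ H.comap σ) (fun _ _ h ↦ h.comap σ)

lemma reflTransGen_edgeSlide_shiftNbrs [Finite V] {G : SimpleGraph V} {x y : V} (hxy : G.Adj x y) :
    ReflTransGen EdgeSlide G (G.shiftNbrs x y) := by
  induction hn : (G.privateNbrs x y).ncard generalizing G with
  | zero => rw [shiftNbrs_eq_self ((Set.ncard_eq_zero (Set.toFinite _)).mp hn)]
  | succ n ih =>
    obtain ⟨z, hz⟩ : (G.privateNbrs x y).Nonempty := Set.nonempty_of_ncard_ne_zero (by omega)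
    obtain ⟨hxz, hyz, hzy⟩ := id hz
    have hslide : EdgeSlide G (G.moveEdge z x y) :=
      edgeSlide_moveEdge hzy hxz.symm hxy fun h ↦ hyz h.symm
    have hxy' : (G.moveEdge z x y).Adj x y := by simp [hxy, hxz.ne, hzy.symm]
    rw [← shiftNbrs_moveEdge hz]
    refine .head hslide (ih hxy' ?_)
    rw [privateNbrs_moveEdge hz, Set.ncard_sdiff_singleton_of_mem hz, hn, Nat.add_sub_cancel]

lemma reflTransGen_edgeSlide_comap_swap_of_adj [Finite V] [DecidableEq V] {G : SimpleGraph V}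
    {x y : V} (hxy : G.Adj x y) : ReflTransGen EdgeSlide G (G.comap (swap x y)) := by
  have hxy' : (G.comap (swap x y)).Adj x y := by simpa using hxy.symm
  have hback := reflTransGen_edgeSlide_shiftNbrs hxy'
  rw [shiftNbrs_comap_swap] at hback
  exact (reflTransGen_edgeSlide_shiftNbrs hxy).trans (reflTransGen_edgeSlide_symm hback)

def slidePerms (G : SimpleGraph V) : Submonoid (Perm V) where
  carrier := {σ | ReflTransGen EdgeSlide G (G.comap σ)}
  one_mem' := .refl
  mul_mem' {_ τ} hσ hτ := hτ.trans (reflTransGen_edgeSlide_comap hσ τ)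

lemma swap_mem_slidePerms_of_reachable [Finite V] [DecidableEq V] {G : SimpleGraph V} {x y : V}
    (h : G.Reachable x y) : swap x y ∈ slidePerms G := by
  rw [reachable_iff_reflTransGen] at h
  induction h with
  | refl => rw [swap_self]; exact one_mem _
  | tail _ hyz ih =>
    exact SubmonoidClass.swap_mem_trans _ ih (reflTransGen_edgeSlide_comap_swap_of_adj hyz)

end

theorem interchange_by_slides_general {V : Type*} [Fintype V] [DecidableEq V] (G : SimpleGraph V)
    (hc : G.Connected) (x y : V) :
    Relation.ReflTransGen EdgeSlide G (G.comap (Equiv.swap x y)) :=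
  swap_mem_slidePerms_of_reachable (hc.preconnected x y)

/-- Interchanging two vertices (the graph obtained by pulling back the adjacency relation
along the transposition of `x` and `y`) can be achieved by a combination of edge slides. -/
theorem interchange_by_slides {V : Type*} [Fintype V] [DecidableEq V] (G : SimpleGraph V)
    (hc : G.Connected) (x y : V) (hxy : x ≠ y) :
    Relation.ReflTransGen EdgeSlide G (G.comap (Equiv.swap x y)) :=
  interchange_by_slides_general G hc x y
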